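/- Fix M ∈ {1,...,m}, η ∈ (0,1), and α ∈ (0,1) with η ≤ αM/m. Let S_{k+1},...,S_n be null scores satisfying 1 + Σ_{i=k+1}^n 1{S_i ≥ 0} ≤ ηℓ where ℓ = n−k, and let S_{n+1},...,S_{n+m} be test scores satisfying Σ_{j=1}^m 1{S_{n+j} ≥ 0} ≥ M. Define empirical p-values p_j = (1/(ℓ+1))(1 + Σ_{i=k+1}^n 1{S_i > S_{n+j}}). Then the BH procedure at level α applied to (p₁,...,p_m) rejects all hypotheses j with S_{n+j} ≥ 0. -/

import Mathlib

/-!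
A nonnegative test score is beaten only by nonnegative null scores, so its empirical p-value is
at most `(1 + #{i | 0 ≤ S i}) / (ℓ + 1) ≤ η ≤ α M / m`. Hence at least `M` p-values lie below the
BH threshold `α M / m`, the BH step-up count is at least `M`, and every such p-value is rejected.
-/

open Finset

/-- The number of rejections of the BH procedure at level `α` applied to the
`p`-values `p : Fin m → ℝ`. -/
noncomputable def bhCount (α : ℝ) (m : ℕ) (p : Fin m → ℝ) : ℕ :=
  ((Finset.range (m + 1)).filter
    (fun k : ℕ =>
      k ≤ (Finset.univ.filter (fun j : Fin m => p j ≤ α * (k : ℝ) / m)).card)).sup id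

noncomputable def empiricalPValue {ℓ : ℕ} (S : Fin ℓ → ℝ) (t : ℝ) : ℝ :=
  ((ℓ : ℝ) + 1)⁻¹ * (1 + ((univ.filter (fun i : Fin ℓ => S i > t)).card : ℝ))

lemma empiricalPValue_le_of_le {ℓ : ℕ} (S : Fin ℓ → ℝ) {a t : ℝ} (hat : a ≤ t) :
    empiricalPValue S t ≤ ((ℓ : ℝ) + 1)⁻¹ * (1 + ((univ.filter (fun i => a ≤ S i)).card : ℝ)) := by
  have hsub : univ.filter (fun i => S i > t) ⊆ univ.filter (fun i => a ≤ S i) :=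
    monotone_filter_right _ fun _ _ hi => hat.trans (le_of_lt hi)
  unfold empiricalPValue
  gcongr

lemma le_bhCount {α : ℝ} {m M : ℕ} {p : Fin m → ℝ} (hMm : M ≤ m)
    (hM : M ≤ (univ.filter (fun j => p j ≤ α * M / m)).card) :
    M ≤ bhCount α m p :=
  le_sup (f := id) (mem_filter.2 ⟨mem_range.2 (Nat.lt_succ_of_le hMm), hM⟩)

lemma le_mul_bhCount_div_of_le {α : ℝ} {m M : ℕ} {p : Fin m → ℝ} (hα : 0 ≤ α) (hMm : M ≤ m)
    (hM : M ≤ (univ.filter (fun j => p j ≤ α * M / m)).card) {j : Fin m}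
    (hj : p j ≤ α * M / m) :
    p j ≤ α * bhCount α m p / m := by
  have hcount : (M : ℝ) ≤ bhCount α m p := by exact_mod_cast le_bhCount hMm hM
  exact hj.trans (by gcongr)

theorem bh_rejects_nonnegative_scores_general (ℓ m M : ℕ) (hMm : M ≤ m)
    (η α : ℝ) (hη : η ∈ Set.Ioo (0 : ℝ) 1) (hα : α ∈ Set.Ioo (0 : ℝ) 1)
    (hηα : η ≤ α * M / m)
    (S : Fin ℓ → ℝ) (T : Fin m → ℝ)
    (hnull : 1 + ((Finset.univ.filter (fun i : Fin ℓ => 0 ≤ S i)).card : ℝ) ≤ η * ℓ)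
    (htest : M ≤ (Finset.univ.filter (fun j : Fin m => 0 ≤ T j)).card)
    (p : Fin m → ℝ)
    (hp : ∀ j, p j = ((ℓ : ℝ) + 1)⁻¹ *
      (1 + ((Finset.univ.filter (fun i : Fin ℓ => S i > T j)).card : ℝ))) :
    ∀ j : Fin m, 0 ≤ T j → p j ≤ α * (bhCount α m p) / m := by
  have hsmall : ∀ j, 0 ≤ T j → p j ≤ α * M / m := fun j hj =>
    calc p j = empiricalPValue S (T j) := hp j
      _ ≤ ((ℓ : ℝ) + 1)⁻¹ * (1 + ((univ.filter (fun i => 0 ≤ S i)).card : ℝ)) :=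
        empiricalPValue_le_of_le S hj
      _ ≤ ((ℓ : ℝ) + 1)⁻¹ * (η * ℓ) := by gcongr
      _ ≤ η := by
        rw [inv_mul_le_iff₀ (by positivity)]
        nlinarith [hη.1]
      _ ≤ α * M / m := hηα
  have hM : M ≤ (univ.filter (fun j => p j ≤ α * M / m)).card :=
    htest.trans (card_le_card (monotone_filter_right _ fun j _ => hsmall j))
  exact fun j hj => le_mul_bhCount_div_of_le hα.1.le hMm hM (hsmall j hj)

/-- If at most `η ℓ` null scores (including a `+1`) are nonnegative while at
least `M` test scores are nonnegative, and `η ≤ α M / m`, then the BH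
procedure at level `α` applied to the empirical `p`-values rejects every
hypothesis with a nonnegative score. -/
theorem bh_rejects_nonnegative_scores (ℓ m M : ℕ) (hM1 : 1 ≤ M) (hMm : M ≤ m)
    (η α : ℝ) (hη : η ∈ Set.Ioo (0 : ℝ) 1) (hα : α ∈ Set.Ioo (0 : ℝ) 1)
    (hηα : η ≤ α * M / m)
    (S : Fin ℓ → ℝ) (T : Fin m → ℝ)
    (hnull : 1 + ((Finset.univ.filter (fun i : Fin ℓ => 0 ≤ S i)).card : ℝ) ≤ η * ℓ)
    (htest : M ≤ (Finset.univ.filter (fun j : Fin m => 0 ≤ T j)).card)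
    (p : Fin m → ℝ)
    (hp : ∀ j, p j = ((ℓ : ℝ) + 1)⁻¹ *
      (1 + ((Finset.univ.filter (fun i : Fin ℓ => S i > T j)).card : ℝ))) :
    ∀ j : Fin m, 0 ≤ T j → p j ≤ α * (bhCount α m p) / m :=
  bh_rejects_nonnegative_scores_general ℓ m M hMm η α hη hα hηα S T hnull htest p hp
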